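/- arXiv:1905.11588 — 2 statements merged into one kernel-verified Lean document; each statement's English description precedes it below -/
import Mathlib

section
/- Let α be a type with decidable equality and let 𝒫 be a monotone property of finite edge sets over α. Suppose E_T and E* are finite edge sets with 𝒫(E_T) true and 𝒫(E*) false. Then the intersection E_T ∩ 𝒞(E*, 𝒫) is nonempty; that is, at least one edge of E_T lies in the critical edge set of E*. -/
/-- The critical edge set of an edge set `E` for a graph property `𝒫`: edges `e ∉ E`
such that there exists `E' ⊇ E` with `𝒫 E'` true and `𝒫 (E' \ {e})` false. -/
def criticalSet {α : Type*} [DecidableEq α] (P : Finset α → Prop) (E : Finset α) :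
    Set α :=
  {e | e ∉ E ∧ ∃ E' : Finset α, E ⊆ E' ∧ P E' ∧ ¬ P (E'.erase e)}

private lemma aux_crit {α : Type*} [DecidableEq α] (P : Finset α → Prop)
    (ET Estar : Finset α) (hEstar : ¬ P Estar) :
    ∀ n : ℕ, ∀ F : Finset α, Estar ⊆ F → F ⊆ Estar ∪ ET → P F →
      (F \ Estar).card ≤ n → ∃ e ∈ ET, e ∈ criticalSet P Estar := by
  intro n
  induction n with
  | zero =>
    intro F hsub hsub2 hPF hcard
    have : F \ Estar = ∅ := Finset.card_eq_zero.mp (Nat.le_zero.mp hcard)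
    have : F ⊆ Estar := by
      intro x hx
      by_contra hxn
      exact Finset.notMem_empty x (this ▸ Finset.mem_sdiff.mpr ⟨hx, hxn⟩)
    exact absurd (hPF) (fun h => hEstar ((Finset.Subset.antisymm this hsub) ▸ h))
  | succ k ih =>
    intro F hsub hsub2 hPF hcard
    by_cases hFe : F \ Estar = ∅
    · have hFE : F ⊆ Estar := fun x hx => by
        by_contra hxn
        exact Finset.notMem_empty x (hFe ▸ Finset.mem_sdiff.mpr ⟨hx, hxn⟩)
      exact absurd hPF (fun h => hEstar ((Finset.Subset.antisymm hFE hsub) ▸ h))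
    · obtain ⟨e, he⟩ := Finset.nonempty_iff_ne_empty.mpr hFe
      rw [Finset.mem_sdiff] at he
      by_cases hP' : P (F.erase e)
      · apply ih (F.erase e)
        · intro x hx
          exact Finset.mem_erase.mpr ⟨fun h => he.2 (h ▸ hx), hsub hx⟩
        · exact (Finset.erase_subset _ _).trans hsub2
        · exact hP'
        · have : (F.erase e) \ Estar = (F \ Estar).erase e := by
            ext x; simp [Finset.mem_sdiff, Finset.mem_erase]; tauto
          rw [this, Finset.card_erase_of_mem (Finset.mem_sdiff.mpr he)]
          omega
      · refine ⟨e, ?_, he.2, F, hsub, hPF, hP'⟩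
        rcases Finset.mem_union.mp (hsub2 he.1) with h | h
        · exact absurd h he.2
        · exact h

/-- Lemma F.1: if `𝒫` is a monotone graph property, `𝒫 E_T` holds and `𝒫 E*` fails,
then some edge of `E_T` lies in the critical edge set of `E*`. -/
theorem rejected_edge_in_critical_set
    {α : Type*} [DecidableEq α] (P : Finset α → Prop)
    (hmono : ∀ E E' : Finset α, E ⊆ E' → P E → P E')
    (ET Estar : Finset α) (hET : P ET) (hEstar : ¬ P Estar) :
    ∃ e ∈ ET, e ∈ criticalSet P Estar := by
  exact aux_crit P ET Estar hEstar ((Estar ∪ ET) \ Estar).card (Estar ∪ ET)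
    Finset.subset_union_left (le_refl _)
    (hmono ET _ Finset.subset_union_right hET) (le_refl _)
end

section
/- Let α be a type with decidable equality and let 𝒫 be a monotone property of finite edge sets over α. Suppose E* and E₀ are finite edge sets such that 𝒫(E₀) is false and E₀ ∩ 𝒞(E*, 𝒫) = ∅. Then 𝒞(E*, 𝒫) ⊆ 𝒞(E₀, 𝒫); that is, every edge critical for E* is also critical for E₀. -/
private lemma strip_aux {α : Type*} [DecidableEq α] (P : Finset α → Prop)
    (hmono : ∀ E E' : Finset α, E ⊆ E' → P E → P E') (Estar : Finset α)
    (S : Finset α)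
    (hS : ∀ f ∈ S, ∀ E'' : Finset α, Estar ⊆ E'' → P E'' → P (E''.erase f)) :
    ∀ B : Finset α, Estar ⊆ B → P (S ∪ B) → P B := by
  induction S using Finset.induction with
  | empty => intro B _ h; simpa using h
  | @insert a S' ha ih =>
    intro B hB h
    have hsub : Estar ⊆ insert a S' ∪ B := hB.trans Finset.subset_union_right
    have h2 := hS a (Finset.mem_insert_self a S') _ hsub h
    have h3 : (insert a S' ∪ B).erase a ⊆ S' ∪ B := by
      intro x hx
      simp only [Finset.mem_erase, Finset.mem_union, Finset.mem_insert] at hx ⊢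
      tauto
    exact ih (fun f hf => hS f (Finset.mem_insert_of_mem hf)) B hB
      (hmono _ _ h3 h2)

/-- Lemma F.2: if `𝒫` is a monotone graph property, `𝒫 E₀` fails and `E₀` contains no
edge of the critical edge set of `E*`, then every edge critical for `E*` is also
critical for `E₀`. -/
theorem critical_set_monotone_step
    {α : Type*} [DecidableEq α] (P : Finset α → Prop)
    (hmono : ∀ E E' : Finset α, E ⊆ E' → P E → P E')
    (Estar E₀ : Finset α) (hE₀ : ¬ P E₀)
    (hdisj : ∀ e ∈ E₀, e ∉ criticalSet P Estar) :
    criticalSet P Estar ⊆ criticalSet P E₀ := by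
  rintro e ⟨heE, E', hsub, hPE', hPerase⟩
  have heE₀ : e ∉ E₀ := by
    intro h
    exact hdisj e h ⟨heE, E', hsub, hPE', hPerase⟩
  refine ⟨heE₀, E₀ ∪ E', Finset.subset_union_left, hmono _ _ Finset.subset_union_right hPE', ?_⟩
  intro hbad
  -- (E₀ ∪ E').erase e = E₀ ∪ E'.erase e  since e ∉ E₀
  have heq : (E₀ ∪ E').erase e = E₀ ∪ E'.erase e := by
    ext x
    simp only [Finset.mem_erase, Finset.mem_union]
    constructor
    · rintro ⟨hne, hx | hx⟩
      · exact Or.inl hx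
      · exact Or.inr ⟨hne, hx⟩
    · rintro (hx | ⟨hne, hx⟩)
      · exact ⟨fun h => heE₀ (h ▸ hx), Or.inl hx⟩
      · exact ⟨hne, Or.inr hx⟩
  rw [heq] at hbad
  set B := E'.erase e with hBdef
  set S := E₀ \ B with hSdef
  have hBsup : Estar ⊆ B := fun x hx =>
    Finset.mem_erase.mpr ⟨fun h => heE (h ▸ hx), hsub hx⟩
  have hSB : S ∪ B = E₀ ∪ B := Finset.sdiff_union_self_eq_union
  have hS : ∀ f ∈ S, ∀ E'' : Finset α, Estar ⊆ E'' → P E'' → P (E''.erase f) := by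
    intro f hf E'' hsub'' hP''
    rw [hSdef, Finset.mem_sdiff] at hf
    have hfE₀ := hf.1
    have hfnotstar : f ∉ Estar := fun h =>
      hf.2 (Finset.mem_erase.mpr ⟨fun he => heE₀ (he ▸ hfE₀), hsub h⟩)
    have h := hdisj f hfE₀
    simp only [criticalSet, Set.mem_setOf_eq] at h
    push_neg at h
    exact h hfnotstar E'' hsub'' hP''
  have : P B := strip_aux P hmono Estar S hS B hBsup (by rwa [hSB])
  exact hPerase this
end
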